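/- arXiv:1807.00972 — 2 statements merged into one kernel-verified Lean document; each statement's English description precedes it below -/
import Mathlib

section
/- Let p be a prime with p ≡ 3 (mod 4), and let f(x) = (x²+1)·((x^p − x)² + p) ∈ ℤ[x]. Then ord_p(f(n)) = 1 for every integer n, and consequently every element of S_ℤ(f) is divisible by p; in particular R(p) = ∅. -/
open Polynomial

/-- The radical of a natural number: product of its distinct prime factors. -/
def rad (n : ℕ) : ℕ := ∏ p ∈ n.primeFactors, p

/-- The abc conjecture. -/
def ABCConjecture : Prop :=
  ∀ ε : ℝ, 0 < ε → ∃ C : ℝ, 0 < C ∧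
    ∀ a b c : ℕ, 0 < a → 0 < b → 0 < c → Nat.Coprime a b → a + b = c →
      (c : ℝ) ≤ C * (rad (a * b * c) : ℝ) ^ ((1 : ℝ) + ε)

/-- The Sylvester matrix of two integer polynomials. -/
noncomputable def sylvester (f g : Polynomial ℤ) :
    Matrix (Fin (g.natDegree + f.natDegree)) (Fin (g.natDegree + f.natDegree)) ℤ :=
  Matrix.of fun i j =>
    if (i : ℕ) < g.natDegree then
      (if (i : ℕ) ≤ (j : ℕ) ∧ (j : ℕ) ≤ (i : ℕ) + f.natDegree then
        f.coeff (f.natDegree + (i : ℕ) - (j : ℕ)) else 0)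
    else
      (if (i : ℕ) - g.natDegree ≤ (j : ℕ) ∧ (j : ℕ) ≤ (i : ℕ) then
        g.coeff (g.natDegree + ((i : ℕ) - g.natDegree) - (j : ℕ)) else 0)

/-- The resultant of two integer polynomials. -/
noncomputable def res (f g : Polynomial ℤ) : ℤ := (_root_.sylvester f g).det

/-- The discriminant of an integer polynomial:
`disc g = (-1)^(d(d-1)/2) * Res(g, g') / lc(g)`. -/
noncomputable def intDisc (g : Polynomial ℤ) : ℤ :=
  ((-1) ^ (g.natDegree * (g.natDegree - 1) / 2) * res g g.derivative) / g.leadingCoeff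

/-- `S_ℤ(f)`: squarefree integers `d` such that `d y₀² = f(x₀)` for some integers
`x₀, y₀` with `y₀ ≠ 0`. -/
def SZ (f : Polynomial ℤ) : Set ℤ :=
  {d | Squarefree d ∧ ∃ x₀ y₀ : ℤ, y₀ ≠ 0 ∧ d * y₀ ^ 2 = f.eval x₀}

/-- `S_ℚ(f)`: squarefree integers `d` such that `d y₀² = f(x₀)` for some rationals
`x₀, y₀` with `y₀ ≠ 0`. -/
def SQ (f : Polynomial ℤ) : Set ℤ :=
  {d | Squarefree d ∧ ∃ x₀ y₀ : ℚ, y₀ ≠ 0 ∧ (d : ℚ) * y₀ ^ 2 = Polynomial.aeval x₀ f}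

/-- The statement `S(r,v)`, for a prime `p` with `e` the parity of `ord_p(D)`:
there are integers `h, x₀, y₀` with `h y₀² ≡ f(x₀) (mod p^(2(v+e)+1))`,
`ord_p(y₀) = v + e`, and `h ≡ r (mod p)`. -/
def SCond (f : Polynomial ℤ) (p : ℕ) (e : ℕ) (r : ℤ) (v : ℕ) : Prop :=
  ∃ h x₀ y₀ : ℤ,
    h * y₀ ^ 2 ≡ f.eval x₀ [ZMOD ((p : ℤ) ^ (2 * (v + e) + 1))] ∧
    ((p : ℤ) ^ (v + e) ∣ y₀ ∧ ¬ (p : ℤ) ^ (v + e + 1) ∣ y₀) ∧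
    h ≡ r [ZMOD (p : ℤ)]

/-- `R(p)`: the set of nonzero residue classes mod `p` represented in `S_ℤ(f)`. -/
def Rset (f : Polynomial ℤ) (p : ℕ) : Set (ZMod p) :=
  {x | x ≠ 0 ∧ ∃ d ∈ SZ f, (d : ZMod p) = x}

/-! For `p ≡ 3 (mod 4)` the factor `n² + 1` is never divisible by `p`, since `-1` is not a
square mod `p`. By Fermat `p ∣ n^p - n`, so `p` divides `(n^p - n)² + p` exactly once. Hence
`p ∥ f(n)`, and in `d y² = f(x)` the prime `p` cannot divide `y`, so it divides `d`. -/

theorem Int.prime_not_dvd_sq_add_one {p : ℕ} [Fact p.Prime] (hp4 : p % 4 = 3) (n : ℤ) :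
    ¬ (p : ℤ) ∣ n ^ 2 + 1 := by
  rw [← ZMod.intCast_zmod_eq_zero_iff_dvd]
  push_cast
  exact fun h ↦ ZMod.mod_four_ne_three_of_sq_eq_neg_one (eq_neg_of_add_eq_zero_left h) hp4

theorem Prime.not_sq_dvd_sq_add_self {R : Type*} [CommRing R] [IsDomain R] {p a : R}
    (hp : Prime p) (ha : p ∣ a) : ¬ p ^ 2 ∣ a ^ 2 + p := by
  intro h
  have hpp : p * p ∣ p * 1 := by
    rw [← sq, mul_one]
    exact (dvd_add_right (pow_dvd_pow_of_dvd ha 2)).mp h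
  exact hp.not_isUnit (isUnit_of_dvd_one ((mul_dvd_mul_iff_left hp.ne_zero).mp hpp))

theorem Prime.dvd_and_not_sq_dvd_mul_sq_add_self {R : Type*} [CommRing R] [IsDomain R]
    {p a u : R} (hp : Prime p) (hu : ¬ p ∣ u) (ha : p ∣ a) :
    p ∣ u * (a ^ 2 + p) ∧ ¬ p ^ 2 ∣ u * (a ^ 2 + p) :=
  ⟨dvd_mul_of_dvd_right (dvd_add (dvd_pow ha two_ne_zero) dvd_rfl) u,
    fun h ↦ hp.not_sq_dvd_sq_add_self ha (hp.pow_dvd_of_dvd_mul_left 2 hu h)⟩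

theorem Prime.dvd_of_dvd_mul_sq_of_not_sq_dvd {M : Type*} [CommMonoidWithZero M] {p d y : M}
    (hp : Prime p) (h : p ∣ d * y ^ 2) (h2 : ¬ p ^ 2 ∣ d * y ^ 2) : p ∣ d := by
  by_contra hd
  have hy : p ∣ y := hp.dvd_of_dvd_pow ((hp.dvd_or_dvd h).resolve_left hd)
  exact h2 (dvd_mul_of_dvd_right (pow_dvd_pow_of_dvd hy 2) d)

theorem dvd_of_mem_SZ {f : ℤ[X]} {p : ℤ} (hp : Prime p)
    (hf : ∀ n, p ∣ f.eval n ∧ ¬ p ^ 2 ∣ f.eval n) {d : ℤ} (hd : d ∈ SZ f) : p ∣ d := by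
  obtain ⟨-, x, y, -, hxy⟩ := hd
  obtain ⟨hdvd, hsq⟩ := hf x
  rw [← hxy] at hdvd hsq
  exact hp.dvd_of_dvd_mul_sq_of_not_sq_dvd hdvd hsq

theorem Rset_eq_empty_of_forall_dvd {f : ℤ[X]} {p : ℕ} (h : ∀ d ∈ SZ f, (p : ℤ) ∣ d) :
    Rset f p = ∅ :=
  Set.eq_empty_of_forall_notMem fun _ ⟨hx, d, hd, hdx⟩ ↦
    hx (hdx ▸ (ZMod.intCast_zmod_eq_zero_iff_dvd d p).mpr (h d hd))

/-- **Example.** For `p ≡ 3 (mod 4)` and `f(x) = (x²+1)((x^p-x)²+p)`, one has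
`ord_p(f(n)) = 1` for all `n`, every element of `S_ℤ(f)` is divisible by `p`, and
`R(p) = ∅`. -/
theorem example_R_empty (p : ℕ) (hp : p.Prime) (hp4 : p % 4 = 3) :
    (∀ n : ℤ,
        (p : ℤ) ∣ ((X ^ 2 + 1) * ((X ^ p - X) ^ 2 + C (p : ℤ)) : Polynomial ℤ).eval n ∧
        ¬ (p : ℤ) ^ 2 ∣
          ((X ^ 2 + 1) * ((X ^ p - X) ^ 2 + C (p : ℤ)) : Polynomial ℤ).eval n) ∧
    (∀ d ∈ SZ ((X ^ 2 + 1) * ((X ^ p - X) ^ 2 + C (p : ℤ))), (p : ℤ) ∣ d) ∧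
    Rset ((X ^ 2 + 1) * ((X ^ p - X) ^ 2 + C (p : ℤ))) p = ∅ := by
  have : Fact p.Prime := ⟨hp⟩
  have hpZ : Prime (p : ℤ) := Nat.prime_iff_prime_int.mp hp
  have hval : ∀ n : ℤ,
      (p : ℤ) ∣ ((X ^ 2 + 1) * ((X ^ p - X) ^ 2 + C (p : ℤ)) : ℤ[X]).eval n ∧
      ¬ (p : ℤ) ^ 2 ∣ ((X ^ 2 + 1) * ((X ^ p - X) ^ 2 + C (p : ℤ)) : ℤ[X]).eval n := by
    intro n
    simp only [eval_mul, eval_add, eval_pow, eval_sub, eval_X, eval_one, eval_C]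
    exact hpZ.dvd_and_not_sq_dvd_mul_sq_add_self (Int.prime_not_dvd_sq_add_one hp4 n)
      (Int.ModEq.pow_prime_eq_self hp n).symm.dvd
  have hSZ := fun d ↦ dvd_of_mem_SZ (d := d) hpZ hval
  exact ⟨hval, hSZ, Rset_eq_empty_of_forall_dvd hSZ⟩
end

section
/- Let p be a prime, let v ≥ 0 be an integer, and let f(x) = x·(x^p − x)^{2v+2} + p^{2v+1}·x ∈ ℤ[x]. Then ord_p(D) = 2v+1, where D is the largest fixed divisor of f, and for every integer r not divisible by p there exist integers h, x₀, y₀ such that h·y₀² ≡ f(x₀) (mod p^{2v+3}), ord_p(y₀) = v+1, and h ≡ r (mod p); indeed one may take h = r, x₀ = r·p, y₀ = p^{v+1}. -/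
open Polynomial

/-!
`f(1) = p ^ (2v+1)`, while `p ^ (2v+2) ∣ (n ^ p - n) ^ (2v+2)` by Fermat, so the fixed divisor is
exactly `p ^ (2v+1)`. At `x₀ = r p` the first term of `f` has valuation at least `2v+3`, leaving
`f(r p) ≡ r p ^ (2v+2) = r (p ^ (v+1)) ^ 2 (mod p ^ (2v+3))`.
-/

theorem eq_of_isGreatest_fixedDivisors {f : ℤ[X]} {D m : ℕ}
    (hD : IsGreatest {k : ℕ | 0 < k ∧ ∀ n : ℤ, (k : ℤ) ∣ f.eval n} D)
    (hm : 0 < m) (hfix : ∀ n : ℤ, (m : ℤ) ∣ f.eval n) {a : ℤ} (ha : f.eval a = m) :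
    D = m := by
  have hDm : (D : ℤ) ∣ m := ha ▸ hD.1.2 a
  exact le_antisymm (Nat.le_of_dvd hm (Int.natCast_dvd_natCast.mp hDm)) (hD.2 ⟨hm, hfix⟩)

theorem Int.prime_dvd_pow_sub_self {p : ℕ} (hp : p.Prime) (n : ℤ) : (p : ℤ) ∣ n ^ p - n := by
  have : Fact p.Prime := ⟨hp⟩
  rw [← ZMod.intCast_zmod_eq_zero_iff_dvd]
  push_cast
  rw [ZMod.pow_card, sub_self]

section Example

variable (p v : ℕ)

noncomputable def examplePoly : ℤ[X] :=
  X * (X ^ p - X) ^ (2 * v + 2) + C ((p : ℤ) ^ (2 * v + 1)) * X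

theorem eval_one_examplePoly : (examplePoly p v).eval 1 = ((p ^ (2 * v + 1) : ℕ) : ℤ) := by
  simp [examplePoly]

variable {p}

theorem pow_dvd_eval_examplePoly (hp : p.Prime) (n : ℤ) :
    (p : ℤ) ^ (2 * v + 1) ∣ (examplePoly p v).eval n := by
  simp only [examplePoly, eval_add, eval_mul, eval_pow, eval_sub, eval_X, eval_C]
  refine dvd_add (dvd_mul_of_dvd_right ?_ _) (dvd_mul_right _ _)
  calc (p : ℤ) ^ (2 * v + 1) ∣ (p : ℤ) ^ (2 * v + 2) := pow_dvd_pow _ (by omega)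
    _ ∣ (n ^ p - n) ^ (2 * v + 2) := pow_dvd_pow_of_dvd (Int.prime_dvd_pow_sub_self hp n) _

theorem eval_mul_examplePoly (hp : 0 < p) (r : ℤ) :
    (examplePoly p v).eval (r * p) =
      r * ((p : ℤ) ^ (v + 1)) ^ 2 +
        (p : ℤ) ^ (2 * v + 3) * (r ^ (2 * v + 3) * ((r * p) ^ (p - 1) - 1) ^ (2 * v + 2)) := by
  simp only [examplePoly, eval_add, eval_mul, eval_pow, eval_sub, eval_X, eval_C]
  rw [← mul_pow_sub_one hp.ne' (r * p), ← mul_sub_one, mul_pow]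
  ring

theorem modEq_eval_mul_examplePoly (hp : 0 < p) (r : ℤ) :
    r * ((p : ℤ) ^ (v + 1)) ^ 2 ≡ (examplePoly p v).eval (r * p) [ZMOD (p : ℤ) ^ (2 * v + 3)] := by
  rw [eval_mul_examplePoly v hp, Int.modEq_iff_dvd, add_sub_cancel_left]
  exact dvd_mul_right _ _

end Example

/-- **Example.** For `f(x) = x(x^p-x)^{2v+2} + p^{2v+1}x`, one has `ord_p(D) = 2v+1`,
and `S(r,v)` holds for every `r` prime to `p`, witnessed by `h = r`, `x₀ = rp`,
`y₀ = p^{v+1}`. -/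
theorem example_S_holds (p : ℕ) (hp : p.Prime) (v : ℕ)
    (D : ℕ) (hD : IsGreatest {k : ℕ | 0 < k ∧ ∀ n : ℤ,
      (k : ℤ) ∣ ((X * (X ^ p - X) ^ (2 * v + 2) + C ((p : ℤ) ^ (2 * v + 1)) * X :
        Polynomial ℤ)).eval n} D) :
    padicValNat p D = 2 * v + 1 ∧
    ∀ r : ℤ, ¬ (p : ℤ) ∣ r →
      ∃ h x₀ y₀ : ℤ, h = r ∧ x₀ = r * (p : ℤ) ∧ y₀ = (p : ℤ) ^ (v + 1) ∧
        h * y₀ ^ 2 ≡ ((X * (X ^ p - X) ^ (2 * v + 2) + C ((p : ℤ) ^ (2 * v + 1)) * X :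
            Polynomial ℤ)).eval x₀ [ZMOD ((p : ℤ) ^ (2 * v + 3))] ∧
        ((p : ℤ) ^ (v + 1) ∣ y₀ ∧ ¬ (p : ℤ) ^ (v + 2) ∣ y₀) ∧
        h ≡ r [ZMOD (p : ℤ)] := by
  have hDeq : D = p ^ (2 * v + 1) :=
    eq_of_isGreatest_fixedDivisors hD (pow_pos hp.pos _)
      (fun n => by exact_mod_cast pow_dvd_eval_examplePoly v hp n) (eval_one_examplePoly p v)
  refine ⟨by rw [hDeq, padicValNat.prime_pow (hp := ⟨hp⟩)], fun r _ => ?_⟩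
  have hpZ : Prime (p : ℤ) := Nat.prime_iff_prime_int.mp hp
  exact ⟨r, r * p, (p : ℤ) ^ (v + 1), rfl, rfl, rfl,
    modEq_eval_mul_examplePoly v hp.pos r,
    ⟨dvd_rfl, (pow_dvd_pow_iff hpZ.ne_zero hpZ.not_isUnit).not.mpr (by omega)⟩, rfl⟩
end
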